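/- Let k ∈ ℂ, let x_1,…,x_n ∈ ℂ be pairwise distinct, let y_1,…,y_m ∈ ℂ be pairwise distinct, with x_i ≠ y_j for all i, j, and set p = ∏_{i=1}^n (X − x_i), q = ∏_{j=1}^m (X − y_j). Then {p,q}_2 + 2k·(p'·q − 2·q'·p) = 0 if and only if: for every i, k + ∑_{l≠i} 1/(x_i − x_l) − 2·∑_{j=1}^m 1/(x_i − y_j) = 0, and for every j, k − 2·∑_{l≠j} 1/(y_j − y_l) + ∑_{i=1}^n 1/(y_j − x_i) = 0. (These are the critical-point equations of the energy E = k∑_i Q_i z_i + ∑_{i<j} Q_iQ_j ln|z_i − z_j| of charges 1 at the x_i and −2 at the y_j in a homogeneous field of strength k.) -/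

import Mathlib

/-!
Write `W = equilibriumPoly k p q = {p,q}_2 + 2k(p'q − 2q'p)`. At a simple zero `a` of `p` one has
`p''(a) = 2 p'(a) ∑_{l≠i} 1/(a − x_l)` and `q'(a) = q(a) ∑_j 1/(a − y_j)`, so `W(x_i)` is
`2 p'(x_i) q(x_i)` times the `i`-th equilibrium expression; symmetrically `W(y_j)` is
`−4 q'(y_j) p(y_j)` times the `j`-th one, and these prefactors do not vanish. Each term of `W`
loses at least one degree against `pq`, so `deg W < n + m`, and `W` vanishes identically iff it
vanishes at the `n + m` distinct charges.
-/

open Polynomial Finset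

section CommRing

variable {R : Type*} [CommRing R]

theorem eval_derivative_X_sub_C_mul_self (a : R) (r : R[X]) :
    eval a (derivative ((X - C a) * r)) = eval a r := by
  simp [derivative_mul]

theorem eval_derivative_derivative_X_sub_C_mul_self (a : R) (r : R[X]) :
    eval a (derivative (derivative ((X - C a) * r))) = 2 * eval a (derivative r) := by
  simp only [derivative_mul, derivative_X_sub_C, one_mul, derivative_add, eval_add, eval_mul,
    eval_sub, eval_X, eval_C, sub_self, zero_mul, add_zero]
  ring

theorem degree_derivative_lt_natDegree (p : R[X]) : (derivative p).degree < p.natDegree := by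
  rcases eq_or_ne p 0 with rfl | hp
  · simp
  · exact (degree_derivative_lt hp).trans_le degree_le_natDegree

theorem degree_mul_lt_of_lt_of_le {u v : R[X]} {a b : ℕ} (hu : u.degree < a)
    (hv : v.degree ≤ b) : (u * v).degree < ↑(a + b) := by
  rcases eq_or_ne v 0 with rfl | hv0
  · simp
  · calc (u * v).degree ≤ u.degree + v.degree := degree_mul_le u v
      _ < ↑(a + b) := WithBot.add_lt_add_of_lt_of_le (degree_ne_bot.2 hv0) hu hv

theorem degree_mul_lt_of_le_of_lt {u v : R[X]} {a b : ℕ} (hu : u.degree ≤ a)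
    (hv : v.degree < b) : (u * v).degree < ↑(a + b) := by
  rw [mul_comm, add_comm]
  exact degree_mul_lt_of_lt_of_le hv hu

theorem degree_mul_le_of_degree_le_zero {c f : R[X]} (hc : c.degree ≤ 0) :
    (c * f).degree ≤ f.degree := by
  simpa using degree_mul_le_of_le hc le_rfl

noncomputable def equilibriumPoly (k : R) (p q : R[X]) : R[X] :=
  derivative (derivative p) * q - 4 * derivative p * derivative q
    + 4 * p * derivative (derivative q) + 2 * C k * (derivative p * q - 2 * derivative q * p)

theorem degree_equilibriumPoly_lt (k : R) (p q : R[X]) :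
    (equilibriumPoly k p q).degree < ↑(p.natDegree + q.natDegree) := by
  have hp' := degree_derivative_lt_natDegree p
  have hq' := degree_derivative_lt_natDegree q
  have hp'' := degree_derivative_le.trans_lt hp'
  have hq'' := degree_derivative_le.trans_lt hq'
  have hp := degree_le_natDegree (p := p)
  have hq := degree_le_natDegree (p := q)
  have h2 : (2 : R[X]).degree ≤ 0 := by simpa using degree_natCast_le (R := R) 2
  have h4 : (4 : R[X]).degree ≤ 0 := by simpa using degree_natCast_le (R := R) 4
  have h2k : (2 * C k).degree ≤ 0 := by simpa using degree_mul_le_of_le h2 degree_C_le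
  have t1 := degree_mul_lt_of_lt_of_le hp'' hq
  have t2 := degree_mul_lt_of_lt_of_le ((degree_mul_le_of_degree_le_zero h4).trans_lt hp') hq'.le
  have t3 := degree_mul_lt_of_le_of_lt ((degree_mul_le_of_degree_le_zero h4).trans hp) hq''
  have t4 := degree_mul_lt_of_lt_of_le ((degree_mul_le_of_degree_le_zero h2).trans_lt hq') hp
  rw [add_comm q.natDegree] at t4
  have t5 := (degree_mul_le_of_degree_le_zero h2k).trans_lt <| (degree_sub_le _ _).trans_lt <|
    max_lt (degree_mul_lt_of_lt_of_le hp' hq) t4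
  exact (degree_add_le _ _).trans_lt <| max_lt ((degree_add_le _ _).trans_lt <|
    max_lt ((degree_sub_le _ _).trans_lt (max_lt t1 t2)) t3) t5

theorem eval_equilibriumPoly_of_eval_eq_zero_left {k a S T : R} {p q : R[X]}
    (hp : eval a p = 0)
    (hp'' : eval a (derivative (derivative p)) = 2 * eval a (derivative p) * S)
    (hq' : eval a (derivative q) = eval a q * T) :
    eval a (equilibriumPoly k p q) = 2 * eval a (derivative p) * eval a q * (k + S - 2 * T) := by
  simp only [equilibriumPoly, eval_add, eval_sub, eval_mul, eval_ofNat, eval_C, hp, hp'', hq']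
  ring

theorem eval_equilibriumPoly_of_eval_eq_zero_right {k a S T : R} {p q : R[X]}
    (hq : eval a q = 0)
    (hq'' : eval a (derivative (derivative q)) = 2 * eval a (derivative q) * S)
    (hp' : eval a (derivative p) = eval a p * T) :
    eval a (equilibriumPoly k p q) = -4 * eval a (derivative q) * eval a p * (k - 2 * S + T) := by
  simp only [equilibriumPoly, eval_add, eval_sub, eval_mul, eval_ofNat, eval_C, hq, hq'', hp']
  ring

variable {ι : Type*} {s : Finset ι} {c : ι → R} {i : ι}

theorem eval_prod_X_sub_C_self (hi : i ∈ s) : eval (c i) (∏ l ∈ s, (X - C (c l))) = 0 := by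
  rw [eval_prod]
  exact prod_eq_zero hi (by simp)

theorem eval_derivative_prod_X_sub_C_self [DecidableEq ι] (hi : i ∈ s) :
    eval (c i) (derivative (∏ l ∈ s, (X - C (c l)))) =
      eval (c i) (∏ l ∈ s.erase i, (X - C (c l))) := by
  rw [← mul_prod_erase s _ hi, eval_derivative_X_sub_C_mul_self]

end CommRing

section Field

variable {F ι : Type*} [Field F] {s : Finset ι} {c : ι → F} {a : F} {i : ι}

theorem eval_prod_X_sub_C_ne_zero (ha : ∀ l ∈ s, a ≠ c l) :
    eval a (∏ l ∈ s, (X - C (c l))) ≠ 0 := by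
  rw [eval_prod]
  exact prod_ne_zero_iff.2 fun l hl => by simpa [sub_eq_zero] using ha l hl

theorem eval_derivative_prod_X_sub_C [DecidableEq ι] (ha : ∀ l ∈ s, a ≠ c l) :
    eval a (derivative (∏ l ∈ s, (X - C (c l)))) =
      eval a (∏ l ∈ s, (X - C (c l))) * ∑ l ∈ s, (a - c l)⁻¹ := by
  rw [derivative_prod_finset, eval_finsetSum, mul_sum]
  refine sum_congr rfl fun l hl => ?_
  rw [derivative_X_sub_C, mul_one, ← mul_prod_erase s _ hl, eval_mul, eval_sub, eval_X, eval_C,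
    mul_comm, inv_mul_cancel_left₀ (sub_ne_zero.2 (ha l hl))]

theorem eval_derivative_prod_X_sub_C_self_ne_zero [DecidableEq ι] (hc : Set.InjOn c s)
    (hi : i ∈ s) : eval (c i) (derivative (∏ l ∈ s, (X - C (c l)))) ≠ 0 := by
  rw [eval_derivative_prod_X_sub_C_self hi]
  exact eval_prod_X_sub_C_ne_zero fun l hl =>
    hc.ne hi (mem_of_mem_erase hl) (ne_of_mem_erase hl).symm

theorem eval_derivative_derivative_prod_X_sub_C_self [DecidableEq ι] (hc : Set.InjOn c s)
    (hi : i ∈ s) :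
    eval (c i) (derivative (derivative (∏ l ∈ s, (X - C (c l))))) =
      2 * eval (c i) (derivative (∏ l ∈ s, (X - C (c l)))) *
        ∑ l ∈ s.erase i, (c i - c l)⁻¹ := by
  rw [eval_derivative_prod_X_sub_C_self hi, ← mul_prod_erase s _ hi,
    eval_derivative_derivative_X_sub_C_mul_self, mul_assoc,
    eval_derivative_prod_X_sub_C fun l hl =>
      hc.ne hi (mem_of_mem_erase hl) (ne_of_mem_erase hl).symm]

theorem eq_zero_iff_forall_eval_eq_zero_of_degree_lt [Fintype ι] {f : F[X]} {v : ι → F}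
    (hv : Function.Injective v) (hf : f.degree < Fintype.card ι) :
    f = 0 ↔ ∀ i, eval (v i) f = 0 :=
  ⟨fun h i => by rw [h, eval_zero], fun h =>
    eq_zero_of_degree_lt_of_eval_index_eq_zero univ hv.injOn hf fun i _ => h i⟩

end Field

/-- Equilibrium of charges `1` at the `x i` and `-2` at the `y j` in a homogeneous
field of strength `k` is equivalent to `{p,q}_2 + 2k(p'q − 2q'p) = 0`. -/
theorem charges_in_field_equilibrium_iff_bilinear
    (k : ℂ) (n m : ℕ) (x : Fin n → ℂ) (y : Fin m → ℂ)
    (hx : Function.Injective x) (hy : Function.Injective y)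
    (hxy : ∀ i j, x i ≠ y j)
    (p q : ℂ[X])
    (hp : p = ∏ i, (X - C (x i))) (hq : q = ∏ j, (X - C (y j))) :
    derivative (derivative p) * q - 4 * derivative p * derivative q
        + 4 * p * derivative (derivative q)
        + 2 * C k * (derivative p * q - 2 * derivative q * p) = 0 ↔
      ((∀ i, k + (∑ l ∈ Finset.univ.erase i, 1 / (x i - x l))
          - 2 * ∑ j, 1 / (x i - y j) = 0) ∧
       (∀ j, k - 2 * (∑ l ∈ Finset.univ.erase j, 1 / (y j - y l))
          + ∑ i, 1 / (y j - x i) = 0)) := by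
  subst hp hq
  have vanish_at_x : ∀ i, eval (x i) (equilibriumPoly k _ _) = 0 ↔
      k + ∑ l ∈ univ.erase i, (x i - x l)⁻¹ - 2 * ∑ j, (x i - y j)⁻¹ = 0 := fun i => by
    rw [eval_equilibriumPoly_of_eval_eq_zero_left (eval_prod_X_sub_C_self (mem_univ i))
        (eval_derivative_derivative_prod_X_sub_C_self hx.injOn (mem_univ i))
        (eval_derivative_prod_X_sub_C fun j _ => hxy i j),
      mul_eq_zero_iff_left (mul_ne_zero (mul_ne_zero two_ne_zero
        (eval_derivative_prod_X_sub_C_self_ne_zero hx.injOn (mem_univ i)))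
        (eval_prod_X_sub_C_ne_zero fun j _ => hxy i j))]
  have vanish_at_y : ∀ j, eval (y j) (equilibriumPoly k _ _) = 0 ↔
      k - 2 * ∑ l ∈ univ.erase j, (y j - y l)⁻¹ + ∑ i, (y j - x i)⁻¹ = 0 := fun j => by
    rw [eval_equilibriumPoly_of_eval_eq_zero_right (eval_prod_X_sub_C_self (mem_univ j))
        (eval_derivative_derivative_prod_X_sub_C_self hy.injOn (mem_univ j))
        (eval_derivative_prod_X_sub_C fun i _ => (hxy i j).symm),
      mul_eq_zero_iff_left (mul_ne_zero (mul_ne_zero (by norm_num)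
        (eval_derivative_prod_X_sub_C_self_ne_zero hy.injOn (mem_univ j)))
        (eval_prod_X_sub_C_ne_zero fun i _ => (hxy i j).symm))]
  have hdeg := degree_equilibriumPoly_lt k (∏ i, (X - C (x i))) (∏ j, (X - C (y j)))
  rw [natDegree_finsetProd_X_sub_C_eq_card, natDegree_finsetProd_X_sub_C_eq_card, card_univ,
    card_univ, ← Fintype.card_sum] at hdeg
  rw [← equilibriumPoly, eq_zero_iff_forall_eval_eq_zero_of_degree_lt (hx.sumElim hy hxy) hdeg,
    Sum.forall]
  simp only [Sum.elim_inl, Sum.elim_inr, vanish_at_x, vanish_at_y, one_div]
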